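/- Let n ≥ 1000 be an integer and let A > 1 be a real number. In the Erdős–Rényi random graph G(n, 1/n), the largest connected component C₁ satisfies P(|C₁| > A·n^{2/3}) ≤ 6·A^{-3/2}. -/

import Mathlib

open MeasureTheory ProbabilityTheory
open scoped ENNReal

/-- The Bernoulli(p) measure on `Bool` (a probability measure when `p ≤ 1`). -/
noncomputable def bernoulliMeasure (p : ℝ≥0∞) : Measure Bool :=
  p • Measure.dirac true + (1 - p) • Measure.dirac false

/-- The Erdős–Rényi measure `G(n,p)`: each potential edge of the complete graph on
`Fin n` is retained independently with probability `p`. -/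
noncomputable def erdosRenyi (n : ℕ) (p : ℝ≥0∞) : Measure (Sym2 (Fin n) → Bool) :=
  Measure.pi fun _ => bernoulliMeasure p

/-- The simple graph on `Fin n` determined by the edge indicators `ω`. -/
def graphOf {n : ℕ} (ω : Sym2 (Fin n) → Bool) : SimpleGraph (Fin n) :=
  SimpleGraph.fromRel fun v w => ω s(v, w) = true

/-- `|C(v)|`: the number of vertices of the connected component of `v`. -/
noncomputable def compSize {n : ℕ} (ω : Sym2 (Fin n) → Bool) (v : Fin n) : ℕ :=
  Nat.card {w | (graphOf ω).Reachable v w}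

/-- `|C₁|`: the number of vertices of the largest connected component. -/
noncomputable def maxCompSize (n : ℕ) (ω : Sym2 (Fin n) → Bool) : ℕ :=
  Finset.univ.sup fun v : Fin n => compSize ω v

/-!
Nachmias–Peres: explore the component of a vertex `v` one vertex at a time. Each step retires
an active vertex and activates its unexplored neighbours, of which there are `Bin(u, 1/n)` with
`u ≤ n`, so the number of active vertices is dominated by the random walk
`S_{t+1} = S_t - 1 + Bin(n, 1/n)` started at `1`, and `|C(v)| ≥ m` forces this walk to stay
positive for `m - 1` steps. That walk is a martingale, so it reaches height `B` before `0` with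
probability at most `1/B`; below `B` its square grows by about `1` per step, so it stays in
`[1, B)` for `M` steps with probability `O(B / M)`. Taking `B ≈ √M` bounds the survival
probability by `6 / √m`. Finally `|C₁| ≥ m` means at least `m` vertices lie in components of size
`≥ m`, whence `P(|C₁| ≥ m) ≤ (n / m) · 6 / √m`, and `m ≈ A n^{2/3}` gives `6 A^{-3/2}`.
-/

open Finset

namespace NachmiasPeres

section Binomial

noncomputable def binomProb (n : ℕ) (p : ℝ) (k : ℕ) : ℝ :=
  n.choose k * p ^ k * (1 - p) ^ (n - k)

lemma binomProb_nonneg {p : ℝ} (hp₀ : 0 ≤ p) (hp₁ : p ≤ 1) (n k : ℕ) : 0 ≤ binomProb n p k := by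
  unfold binomProb
  have : 0 ≤ 1 - p := by linarith
  positivity

theorem sum_descFactorial_mul_binomProb (p : ℝ) (r n : ℕ) :
    ∑ k ∈ range (n + 1), binomProb n p k * k.descFactorial r = n.descFactorial r * p ^ r := by
  induction r generalizing n with
  | zero =>
    have h := add_pow p (1 - p) n
    rw [add_sub_cancel, one_pow] at h
    simp only [Nat.descFactorial_zero, Nat.cast_one, mul_one, pow_zero]
    exact (sum_congr rfl fun _ _ => by rw [binomProb]; ring).trans h.symm
  | succ r ih =>
    cases n with
    | zero => simp
    | succ n =>
      have key : ∀ i ∈ range (n + 1), binomProb (n + 1) p (i + 1) * (i + 1).descFactorial (r + 1)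
          = (n + 1) * p * (binomProb n p i * i.descFactorial r) := by
        intro i _
        have hc : ((n + 1 : ℕ) : ℝ) * n.choose i = (n + 1).choose (i + 1) * (i + 1) := by
          exact_mod_cast Nat.add_one_mul_choose_eq n i
        simp only [binomProb, Nat.succ_descFactorial_succ, Nat.reduceSubDiff]
        push_cast at hc ⊢
        linear_combination (-(i.descFactorial r : ℝ) * p ^ (i + 1) * (1 - p) ^ (n - i)) * hc
      rw [sum_range_succ', sum_congr rfl key, ← mul_sum, ih, Nat.succ_descFactorial_succ]
      simp
      ring

lemma sum_binomProb (p : ℝ) (n : ℕ) : ∑ k ∈ range (n + 1), binomProb n p k = 1 := by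
  simpa using sum_descFactorial_mul_binomProb p 0 n

lemma sum_binomProb_succ_mul (p : ℝ) (u : ℕ) (f : ℕ → ℝ) :
    ∑ k ∈ range (u + 2), binomProb (u + 1) p k * f k =
      p * ∑ k ∈ range (u + 1), binomProb u p k * f (k + 1) +
        (1 - p) * ∑ k ∈ range (u + 1), binomProb u p k * f k := by
  have h := sum_choose_succ_mul (fun i j => p ^ i * (1 - p) ^ j * f i) u
  simp only [binomProb, mul_sum]
  convert h using 1
  · exact sum_congr rfl fun _ _ => by ring
  rw [add_comm]
  congr 1 <;> refine sum_congr rfl fun i hi => ?_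
  · rw [show u + 1 - i = u - i + 1 by have := mem_range.1 hi; omega]; ring
  · ring

theorem sum_binomProb_mul_le_of_le {p : ℝ} (hp₀ : 0 ≤ p) (hp₁ : p ≤ 1) {f : ℕ → ℝ}
    (hf : Monotone f) {u n : ℕ} (hun : u ≤ n) :
    ∑ k ∈ range (u + 1), binomProb u p k * f k ≤ ∑ k ∈ range (n + 1), binomProb n p k * f k := by
  induction n, hun using Nat.le_induction with
  | base => rfl
  | succ n _ ih =>
    have hshift : ∑ k ∈ range (n + 1), binomProb n p k * f k ≤
        ∑ k ∈ range (n + 1), binomProb n p k * f (k + 1) :=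
      sum_le_sum fun k _ => mul_le_mul_of_nonneg_left (hf k.le_succ) (binomProb_nonneg hp₀ hp₁ n k)
    rw [sum_binomProb_succ_mul]
    nlinarith

lemma binomProb_inv_nonneg (n k : ℕ) : 0 ≤ binomProb n (n : ℝ)⁻¹ k :=
  binomProb_nonneg (by positivity) (Nat.cast_inv_le_one n) n k

lemma sum_binomProb_inv_mul_descFactorial_le (n r : ℕ) :
    ∑ k ∈ range (n + 1), binomProb n (n : ℝ)⁻¹ k * k.descFactorial r ≤ 1 := by
  rw [sum_descFactorial_mul_binomProb, inv_pow, ← div_eq_mul_inv]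
  exact div_le_one_of_le₀ (by exact_mod_cast n.descFactorial_le_pow r) (by positivity)

lemma sum_binomProb_inv_mul_self {n : ℕ} (hn : n ≠ 0) :
    ∑ k ∈ range (n + 1), binomProb n (n : ℝ)⁻¹ k * k = 1 := by
  simpa [hn] using sum_descFactorial_mul_binomProb (n : ℝ)⁻¹ 1 n

lemma sum_binomProb_inv_mul_descFactorial_two {n : ℕ} (hn : n ≠ 0) :
    ∑ k ∈ range (n + 1), binomProb n (n : ℝ)⁻¹ k * k.descFactorial 2 = 1 - (n : ℝ)⁻¹ := by
  rw [sum_descFactorial_mul_binomProb, Nat.cast_descFactorial_two]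
  field_simp

lemma sum_binomProb_inv_mul_sq {n a : ℕ} (hn : n ≠ 0) (ha : 1 ≤ a) :
    ∑ k ∈ range (n + 1), binomProb n (n : ℝ)⁻¹ k * ((a - 1 + k : ℕ) : ℝ) ^ 2 =
      (a : ℝ) ^ 2 + 1 - (n : ℝ)⁻¹ := by
  have hsq : ∀ k ∈ range (n + 1), binomProb n (n : ℝ)⁻¹ k * ((a - 1 + k : ℕ) : ℝ) ^ 2 =
      ((a : ℝ) - 1) ^ 2 * binomProb n (n : ℝ)⁻¹ k + (2 * a - 1) * (binomProb n (n : ℝ)⁻¹ k * k) +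
        binomProb n (n : ℝ)⁻¹ k * k.descFactorial 2 := by
    intro k _
    rw [Nat.cast_descFactorial_two]
    push_cast [Nat.cast_sub ha]
    ring
  rw [sum_congr rfl hsq, sum_add_distrib, sum_add_distrib, ← mul_sum, ← mul_sum, sum_binomProb,
    sum_binomProb_inv_mul_self hn, sum_binomProb_inv_mul_descFactorial_two hn]
  ring

lemma six_mul_sub_two_sq_le_descFactorial_three (k : ℕ) : 6 * (k - 2) ^ 2 ≤ k.descFactorial 3 := by
  obtain hk | ⟨j, rfl⟩ : k < 4 ∨ ∃ j, k = j + 4 := by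
    rcases lt_or_ge k 4 with hk | hk
    exacts [.inl hk, .inr ⟨k - 4, by omega⟩]
  · interval_cases k <;> decide
  · have h : 6 * (j + 2) ≤ (j + 3) * (j + 4) := by nlinarith
    simp only [Nat.descFactorial_succ, Nat.descFactorial_zero, Nat.reduceSubDiff, mul_one]
    calc 6 * (j + 2) ^ 2 = (j + 2) * (6 * (j + 2)) := by ring
      _ ≤ (j + 2) * ((j + 3) * (j + 4)) := Nat.mul_le_mul_left _ h

end Binomial

theorem add_sum_pow_le_pow_of_add_le {R E : Type*} [Semiring R] [AddCommMonoid E] [PartialOrder E]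
    [IsOrderedAddMonoid E] [Module R E] {L : Module.End R E} (hL : Monotone L) {V g : E}
    (h : V + g ≤ L V) (j : ℕ) : V + ∑ i ∈ range j, (L ^ i) g ≤ (L ^ j) V := by
  induction j with
  | zero => simp
  | succ j ih =>
    have hLj : Monotone (L ^ j) := by rw [Module.End.coe_pow]; exact hL.iterate j
    calc V + ∑ i ∈ range (j + 1), (L ^ i) g = (V + ∑ i ∈ range j, (L ^ i) g) + (L ^ j) g := by
          rw [sum_range_succ, add_assoc]
      _ ≤ (L ^ j) V + (L ^ j) g := add_le_add_left ih _
      _ = (L ^ j) (V + g) := (map_add _ _ _).symm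
      _ ≤ (L ^ (j + 1)) V := by rw [pow_succ, Module.End.mul_apply]; exact hLj h

/-- One step of the walk `a ↦ a - 1 + Bin(n, 1/n)`, frozen outside `s`, acting on observables:
`(walkOp n s ^ j) f a` is the expectation of `f` at time `j` for the walk started at `a`. -/
noncomputable def walkOp (n : ℕ) (s : Set ℕ) : Module.End ℝ (ℕ → ℝ) where
  toFun f a := by
    classical
    exact if a ∈ s then ∑ k ∈ range (n + 1), binomProb n (n : ℝ)⁻¹ k * f (a - 1 + k) else f a
  map_add' f g := by ext a; by_cases h : a ∈ s <;> simp [h, mul_add, sum_add_distrib]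
  map_smul' c f := by ext a; by_cases h : a ∈ s <;> simp [h, mul_sum, mul_left_comm]

section Walk

variable {n : ℕ} {s : Set ℕ}

lemma walkOp_apply_of_mem {a : ℕ} (ha : a ∈ s) (f : ℕ → ℝ) :
    walkOp n s f a = ∑ k ∈ range (n + 1), binomProb n (n : ℝ)⁻¹ k * f (a - 1 + k) := if_pos ha

lemma walkOp_apply_of_notMem {a : ℕ} (ha : a ∉ s) (f : ℕ → ℝ) : walkOp n s f a = f a :=
  if_neg ha

lemma walkOp_pow_apply_of_notMem {a : ℕ} (ha : a ∉ s) (j : ℕ) (f : ℕ → ℝ) :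
    (walkOp n s ^ j) f a = f a := by
  induction j with
  | zero => rfl
  | succ j ih => rw [pow_succ', Module.End.mul_apply, walkOp_apply_of_notMem ha, ih]

lemma walkOp_monotone : Monotone (walkOp n s) := by
  intro f g hfg a
  by_cases ha : a ∈ s
  · simp only [walkOp_apply_of_mem ha]
    exact sum_le_sum fun k _ => mul_le_mul_of_nonneg_left (hfg _) (binomProb_inv_nonneg n k)
  · simpa only [walkOp_apply_of_notMem ha] using hfg a

lemma walkOp_pow_monotone (j : ℕ) : Monotone (walkOp n s ^ j) := by
  rw [Module.End.coe_pow]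
  exact walkOp_monotone.iterate j

lemma walkOp_const (c : ℝ) : walkOp n s (fun _ => c) = fun _ => c := by
  ext a
  by_cases ha : a ∈ s
  · rw [walkOp_apply_of_mem ha, ← sum_mul, sum_binomProb, one_mul]
  · rw [walkOp_apply_of_notMem ha]

lemma walkOp_pow_const (c : ℝ) (j : ℕ) : (walkOp n s ^ j) (fun _ => c) = fun _ => c := by
  rw [Module.End.coe_pow]
  exact Function.iterate_fixed (walkOp_const c) j

lemma walkOp_natCast (hn : n ≠ 0) (hs : s ⊆ Set.Ici 1) :
    walkOp n s Nat.cast = Nat.cast := by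
  ext a
  by_cases ha : a ∈ s
  · have ha₁ : 1 ≤ a := hs ha
    rw [walkOp_apply_of_mem ha]
    simp only [Nat.cast_add, Nat.cast_sub ha₁, Nat.cast_one, mul_add, sum_add_distrib, ← sum_mul,
      sum_binomProb, sum_binomProb_inv_mul_self hn]
    ring
  · rw [walkOp_apply_of_notMem ha]

lemma walkOp_pow_natCast (hn : n ≠ 0) (hs : s ⊆ Set.Ici 1) (j : ℕ) :
    (walkOp n s ^ j) Nat.cast = Nat.cast := by
  rw [Module.End.coe_pow]
  exact Function.iterate_fixed (walkOp_natCast hn hs) j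

lemma walkOp_indicator_le : walkOp n s (s.indicator 1) ≤ s.indicator 1 := by
  intro a
  by_cases ha : a ∈ s
  · calc walkOp n s (s.indicator 1) a ≤ walkOp n s (fun _ => 1) a :=
          walkOp_monotone (Set.indicator_le_self' fun _ _ => zero_le_one) a
      _ = s.indicator 1 a := by rw [walkOp_const, Set.indicator_of_mem ha, Pi.one_apply]
  · rw [walkOp_apply_of_notMem ha]

lemma walkOp_pow_indicator_antitone : Antitone fun j => (walkOp n s ^ j) (s.indicator 1) := by
  refine antitone_nat_of_succ_le fun j => ?_
  rw [pow_succ, Module.End.mul_apply]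
  exact walkOp_pow_monotone j walkOp_indicator_le

lemma walkOp_pow_le_of_subset {t : Set ℕ} (hts : t ⊆ s) {f : ℕ → ℝ} (hf : f ≤ 1)
    (hf₁ : ∀ a ∈ s \ t, f a = 1) (j : ℕ) : (walkOp n s ^ j) f ≤ (walkOp n t ^ j) f := by
  induction j with
  | zero => rfl
  | succ j ih =>
    set g := (walkOp n t ^ j) f
    have hg : g ≤ 1 := (walkOp_pow_monotone j hf).trans_eq (walkOp_pow_const 1 j)
    rw [pow_succ', pow_succ', Module.End.mul_apply, Module.End.mul_apply]
    refine (walkOp_monotone ih).trans fun a => ?_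
    by_cases hat : a ∈ t
    · rw [walkOp_apply_of_mem hat, walkOp_apply_of_mem (hts hat)]
    by_cases has : a ∈ s
    · rw [walkOp_apply_of_notMem hat, walkOp_pow_apply_of_notMem hat, hf₁ a ⟨has, hat⟩]
      exact (walkOp_monotone hg a).trans_eq (congrFun (walkOp_const 1) a)
    · rw [walkOp_apply_of_notMem hat, walkOp_apply_of_notMem has]

lemma walkOp_Ici_one_monotone {f : ℕ → ℝ} (hf : Monotone f) :
    Monotone (walkOp n (Set.Ici 1) f) := by
  intro a b hab
  rcases Nat.eq_zero_or_pos b with rfl | hb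
  · rw [Nat.le_zero.1 hab]
  rw [walkOp_apply_of_mem (Set.mem_Ici.2 hb)]
  rcases Nat.eq_zero_or_pos a with rfl | ha
  · rw [walkOp_apply_of_notMem (by simp)]
    calc f 0 = ∑ k ∈ range (n + 1), binomProb n (n : ℝ)⁻¹ k * f 0 := by
          rw [← sum_mul, sum_binomProb, one_mul]
      _ ≤ _ := sum_le_sum fun k _ =>
          mul_le_mul_of_nonneg_left (hf (Nat.zero_le _)) (binomProb_inv_nonneg n k)
  · rw [walkOp_apply_of_mem (Set.mem_Ici.2 ha)]
    exact sum_le_sum fun k _ =>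
      mul_le_mul_of_nonneg_left (hf (by omega)) (binomProb_inv_nonneg n k)

/-- `a²` for `a ≤ B`, continued by the tangent line `2Ba - B²` beyond `B`. -/
noncomputable def capSq (B a : ℕ) : ℝ := (a : ℝ) ^ 2 - ((a - B : ℕ) : ℝ) ^ 2

lemma capSq_of_le {B a : ℕ} (h : a ≤ B) : capSq B a = (a : ℝ) ^ 2 := by
  simp [capSq, Nat.sub_eq_zero_of_le h]

lemma capSq_le (B a : ℕ) : capSq B a ≤ 2 * B * a := by
  rcases le_total a B with h | h
  · rw [capSq_of_le h]
    have : (a : ℝ) ≤ B := by exact_mod_cast h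
    nlinarith [(a.cast_nonneg : (0 : ℝ) ≤ a)]
  · rw [capSq, Nat.cast_sub h]
    nlinarith [(B.cast_nonneg : (0 : ℝ) ≤ B)]

/-- One step inside `[1, B)` raises `E a²` by the variance `1 - 1/n`, and overshooting `B` costs
at most `E X(X-1)(X-2)/6 ≤ 1/6`; for `n ≥ 30` that leaves `1 - 1/30 - 1/6 = 4/5`. -/
lemma capSq_add_le_walkOp (hn : 30 ≤ n) (B : ℕ) :
    capSq B + (4 / 5 : ℝ) • (Set.Ico 1 B).indicator 1 ≤ walkOp n (Set.Ico 1 B) (capSq B) := by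
  intro a
  by_cases ha : a ∈ Set.Ico 1 B
  · obtain ⟨ha₁, haB⟩ := Set.mem_Ico.1 ha
    have hn' : n ≠ 0 := by omega
    have hexc : ∀ k, ((a - 1 + k - B : ℕ) : ℝ) ^ 2 ≤ k.descFactorial 3 / 6 := by
      intro k
      have hk : a - 1 + k - B ≤ k - 2 := by omega
      have : 6 * (a - 1 + k - B) ^ 2 ≤ k.descFactorial 3 :=
        le_trans (by gcongr) (six_mul_sub_two_sq_le_descFactorial_three k)
      rw [le_div_iff₀ (by norm_num), mul_comm]
      exact_mod_cast this
    have hexc_sum : ∑ k ∈ range (n + 1), binomProb n (n : ℝ)⁻¹ k * ((a - 1 + k - B : ℕ) : ℝ) ^ 2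
        ≤ 1 / 6 := by
      calc _ ≤ ∑ k ∈ range (n + 1), binomProb n (n : ℝ)⁻¹ k * k.descFactorial 3 / 6 :=
            sum_le_sum fun k _ => by
              rw [mul_div_assoc]
              exact mul_le_mul_of_nonneg_left (hexc k) (binomProb_inv_nonneg n k)
        _ ≤ 1 / 6 := by
            rw [← sum_div]; gcongr; exact sum_binomProb_inv_mul_descFactorial_le n 3
    have hinv : (n : ℝ)⁻¹ ≤ 1 / 30 := by
      rw [inv_le_comm₀ (by positivity) (by norm_num)]; norm_num; exact_mod_cast hn
    rw [Pi.add_apply, capSq_of_le haB.le]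
    simp only [Pi.smul_apply, Set.indicator_of_mem ha, Pi.one_apply, smul_eq_mul,
      walkOp_apply_of_mem ha, capSq, mul_sub, sum_sub_distrib,
      sum_binomProb_inv_mul_sq hn' ha₁]
    linarith
  · simp [Set.indicator_of_notMem ha, walkOp_apply_of_notMem ha]

/-- Optional stopping for the martingale `a ↦ a`. -/
lemma walkOp_pow_indicator_Ici_le (hn : n ≠ 0) (hs : s ⊆ Set.Ici 1) {B : ℕ}
    (hB : 0 < B) (j a : ℕ) : (walkOp n s ^ j) ((Set.Ici B).indicator 1) a ≤ a / B := by
  have hB' : (0 : ℝ) < B := by exact_mod_cast hB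
  have hle : (Set.Ici B).indicator 1 ≤ (B : ℝ)⁻¹ • (Nat.cast : ℕ → ℝ) := by
    intro x
    by_cases hx : x ∈ Set.Ici B
    · rw [Set.indicator_of_mem hx, Pi.one_apply, Pi.smul_apply, smul_eq_mul, inv_mul_eq_div,
        one_le_div hB']
      exact_mod_cast hx
    · rw [Set.indicator_of_notMem hx, Pi.smul_apply, smul_eq_mul]; positivity
  have := walkOp_pow_monotone (n := n) (s := s) j hle a
  rwa [map_smul, walkOp_pow_natCast hn hs, Pi.smul_apply, smul_eq_mul, inv_mul_eq_div] at this

/-- Each step spent in `[1, B)` raises `E capSq B` by `4/5`, while `capSq B a ≤ 2Ba`. -/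
lemma walkOp_pow_indicator_Ico_le (hn : 30 ≤ n) {B a : ℕ} (ha : a ≤ B) (M : ℕ) :
    M * (walkOp n (Set.Ico 1 B) ^ M) ((Set.Ico 1 B).indicator 1) a ≤
      5 / 4 * (2 * B * a - a ^ 2) := by
  set L := walkOp n (Set.Ico 1 B)
  set g := (Set.Ico 1 B).indicator (1 : ℕ → ℝ)
  have hdrift := add_sum_pow_le_pow_of_add_le walkOp_monotone (capSq_add_le_walkOp hn B) M a
  have hcap : (L ^ M) (capSq B) a ≤ 2 * B * a := by
    have := walkOp_pow_monotone (n := n) (s := Set.Ico 1 B) M (fun x => capSq_le B x) a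
    rwa [show (fun x : ℕ => 2 * (B : ℝ) * x) = (2 * B : ℝ) • Nat.cast from rfl, map_smul,
      walkOp_pow_natCast (by omega) Set.Ico_subset_Ici_self] at this
  have hanti : M * (L ^ M) g a ≤ ∑ i ∈ range M, (L ^ i) g a := by
    calc M * (L ^ M) g a = ∑ _i ∈ range M, (L ^ M) g a := by simp
      _ ≤ _ := sum_le_sum fun i hi => walkOp_pow_indicator_antitone (mem_range.1 hi).le a
  simp only [Pi.add_apply, Finset.sum_apply, map_smul, Pi.smul_apply, smul_eq_mul, ← mul_sum,
    capSq_of_le ha] at hdrift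
  linarith

/-- The probability that the walk started at `a` stays positive for `j` steps. -/
noncomputable def survivalProb (n j a : ℕ) : ℝ :=
  (walkOp n (Set.Ici 1) ^ j) ((Set.Ici 1).indicator 1) a

lemma survivalProb_nonneg (j a : ℕ) : 0 ≤ survivalProb n j a :=
  (congrFun (walkOp_pow_const 0 j) a).symm.trans_le
    (walkOp_pow_monotone j (Set.indicator_nonneg fun _ _ => zero_le_one) a)

lemma survivalProb_le_one (j a : ℕ) : survivalProb n j a ≤ 1 :=
  (walkOp_pow_monotone j (Set.indicator_le_self' fun _ _ => zero_le_one) a).trans_eq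
    (congrFun (walkOp_pow_const 1 j) a)

lemma survivalProb_zero {a : ℕ} (ha : 1 ≤ a) : survivalProb n 0 a = 1 := by
  simp [survivalProb, Set.indicator_of_mem (Set.mem_Ici.2 ha)]

lemma survivalProb_succ (j : ℕ) {a : ℕ} (ha : 1 ≤ a) :
    survivalProb n (j + 1) a =
      ∑ k ∈ range (n + 1), binomProb n (n : ℝ)⁻¹ k * survivalProb n j (a - 1 + k) := by
  rw [survivalProb, pow_succ', Module.End.mul_apply, walkOp_apply_of_mem (Set.mem_Ici.2 ha)]
  rfl

lemma survivalProb_monotone (j : ℕ) : Monotone (survivalProb n j) := by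
  induction j with
  | zero =>
    intro a b hab
    simp only [survivalProb, pow_zero, Module.End.one_apply]
    by_cases ha : a ∈ Set.Ici 1
    · rw [Set.indicator_of_mem ha, Set.indicator_of_mem (Set.mem_Ici.2 (ha.trans hab))]
      exact le_rfl
    · rw [Set.indicator_of_notMem ha]
      exact Set.indicator_nonneg (fun _ _ => zero_le_one) b
  | succ j ih =>
    unfold survivalProb
    rw [pow_succ', Module.End.mul_apply]
    exact walkOp_Ici_one_monotone ih

theorem survivalProb_le (hn : 30 ≤ n) {B : ℕ} (hB : 1 ≤ B) {M : ℕ} (hM : 0 < M) :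
    survivalProb n M 1 ≤ 1 / B + 5 / 4 * (2 * B - 1) / M := by
  have hsplit : (Set.Ici 1).indicator (1 : ℕ → ℝ) =
      (Set.Ici B).indicator 1 + (Set.Ico 1 B).indicator 1 := by
    rw [← Set.Ico_union_Ici_eq_Ici hB, Set.indicator_union_of_disjoint
      ((Set.Iio_disjoint_Ici le_rfl).mono_left Set.Ico_subset_Iio_self), add_comm]
    rfl
  have hstop : survivalProb n M 1 ≤
      (walkOp n (Set.Ico 1 B) ^ M) ((Set.Ici 1).indicator 1) 1 :=
    walkOp_pow_le_of_subset Set.Ico_subset_Ici_self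
      (Set.indicator_le_self' fun _ _ => zero_le_one)
      (fun a ha => Set.indicator_of_mem ha.1 _) M 1
  have hhigh := walkOp_pow_indicator_Ici_le (n := n) (by omega)
    (Set.Ico_subset_Ici_self : Set.Ico 1 B ⊆ _) hB M 1
  have hlow := walkOp_pow_indicator_Ico_le hn hB M
  rw [hsplit, map_add, Pi.add_apply] at hstop
  have hlow' : (walkOp n (Set.Ico 1 B) ^ M) ((Set.Ico 1 B).indicator 1) 1 ≤
      5 / 4 * (2 * B - 1) / M := by
    rw [le_div_iff₀ (by exact_mod_cast hM)]
    push_cast at hlow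
    linarith
  push_cast at hhigh
  linarith

theorem survivalProb_le_six_div_sqrt (hn : 30 ≤ n) (M : ℕ) :
    survivalProb n M 1 ≤ 6 / √(M + 1) := by
  have hsqrt_pos : 0 < √((M : ℝ) + 1) := Real.sqrt_pos.2 (by positivity)
  by_cases hM : M < 4
  · refine (survivalProb_le_one M 1).trans ?_
    rw [le_div_iff₀ hsqrt_pos, one_mul, Real.sqrt_le_left (by norm_num)]
    have : (M : ℝ) ≤ 3 := by exact_mod_cast (by omega : M ≤ 3)
    linarith
  set B := Nat.sqrt M
  have hB : 2 ≤ B := Nat.le_sqrt.2 (by omega)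
  have hBM : ((B : ℝ)) ^ 2 ≤ M := by exact_mod_cast (Nat.sqrt_le' M)
  have hMB : (M : ℝ) + 1 ≤ ((B : ℝ) + 1) ^ 2 := by exact_mod_cast Nat.lt_succ_sqrt' M
  have hB' : (2 : ℝ) ≤ B := by exact_mod_cast hB
  have hM' : (0 : ℝ) < M := by nlinarith
  calc survivalProb n M 1 ≤ 1 / B + 5 / 4 * (2 * B - 1) / M :=
        survivalProb_le hn (by omega) (by omega)
    _ ≤ 1 / B + 5 / 2 / B := by
        gcongr 1 / B + ?_
        rw [div_le_div_iff₀ hM' (by positivity)]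
        nlinarith
    _ ≤ 6 / (B + 1) := by
        rw [← add_div, div_le_div_iff₀ (by positivity) (by positivity)]
        linarith
    _ ≤ 6 / √(M + 1) := by
        gcongr
        exact Real.sqrt_le_iff.2 ⟨by positivity, hMB⟩

end Walk

theorem pi_inter_eq_mul_of_dependsOn {ι α : Type*} [Fintype ι] [MeasurableSpace α] [Countable α]
    [MeasurableSingletonClass α] (ν : ι → Measure α) [∀ i, IsProbabilityMeasure (ν i)]
    {D D' : Finset ι} (hD : Disjoint D D') {S T : Set (ι → α)} (hS : DependsOn (· ∈ S) D)
    (hT : DependsOn (· ∈ T) D') :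
    Measure.pi ν (S ∩ T) = Measure.pi ν S * Measure.pi ν T := by
  obtain ⟨f, hf⟩ := dependsOn_iff_exists_comp.1 hS
  obtain ⟨g, hg⟩ := dependsOn_iff_exists_comp.1 hT
  have hind := (iIndepFun_pi (μ := ν) (X := fun _ => id) fun _ => aemeasurable_id).indepFun_finset
    D D' hD fun _ => measurable_pi_apply _
  convert hind.measure_inter_preimage_eq_mul {x | f x} {x | g x} .of_discrete .of_discrete using 3
  all_goals ext ω
  exacts [.of_eq (congrFun hf ω), .of_eq (congrFun hg ω), .of_eq (congrFun hf ω),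
    .of_eq (congrFun hg ω)]

theorem natCast_mul_measureReal_le_sum {Ω ι : Type*} [MeasurableSpace Ω] (μ : Measure Ω)
    [IsFiniteMeasure μ] (s : Finset ι) {S : Set Ω} {T : ι → Set Ω} (hS : MeasurableSet S)
    (hT : ∀ i, MeasurableSet (T i)) [∀ ω, DecidablePred (ω ∈ T ·)] {m : ℕ}
    (h : ∀ ω ∈ S, m ≤ #{i ∈ s | ω ∈ T i}) :
    m * μ.real S ≤ ∑ i ∈ s, μ.real (T i) := by
  have hle : (m : ℝ≥0∞) * μ S ≤ ∑ i ∈ s, μ (T i) := by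
    calc (m : ℝ≥0∞) * μ S = ∫⁻ ω, S.indicator (fun _ => (m : ℝ≥0∞)) ω ∂μ :=
          (lintegral_indicator_const hS _).symm
      _ ≤ ∫⁻ ω, ∑ i ∈ s, (T i).indicator 1 ω ∂μ := lintegral_mono fun ω => by
          by_cases hω : ω ∈ S
          · simp only [Set.indicator_of_mem hω, Set.indicator_apply, Pi.one_apply, sum_boole]
            exact_mod_cast h ω hω
          · simp [Set.indicator_of_notMem hω]
      _ = ∑ i ∈ s, μ (T i) := by
          rw [lintegral_finsetSum _ fun i _ => measurable_one.indicator (hT i)]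
          simp only [lintegral_indicator_one (hT _)]
  have hfin : ∀ i ∈ s, μ (T i) ≠ ⊤ := fun i _ => measure_ne_top μ (T i)
  have := ENNReal.toReal_mono (ENNReal.sum_ne_top.2 hfin) hle
  simpa [measureReal_def, ENNReal.toReal_mul, ENNReal.toReal_sum hfin] using this

section Exploration

variable {V : Type*} [LinearOrder V]

/-- Exploration of a component with active vertices `A` and unexplored vertices `U`: each step
retires the least active vertex and activates its unexplored neighbours. `Survives G j A U` says
the active set is still nonempty after `j` steps. -/
def Survives (G : SimpleGraph V) [DecidableRel G.Adj] : ℕ → Finset V → Finset V → Prop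
  | 0, A, _ => A.Nonempty
  | j + 1, A, U => ∃ h : A.Nonempty,
      Survives G j (A.erase (A.min' h) ∪ {u ∈ U | G.Adj (A.min' h) u})
        (U \ {u ∈ U | G.Adj (A.min' h) u})

lemma not_survives_empty (G : SimpleGraph V) [DecidableRel G.Adj] (j : ℕ) (U : Finset V) :
    ¬ Survives G j ∅ U := by
  cases j <;> simp [Survives]

lemma survives_congr {G G' : SimpleGraph V} [DecidableRel G.Adj] [DecidableRel G'.Adj] {j : ℕ}
    {A U : Finset V} (h : ∀ x ∈ A ∪ U, ∀ y ∈ A ∪ U, G.Adj x y ↔ G'.Adj x y) :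
    Survives G j A U ↔ Survives G' j A U := by
  induction j generalizing A U with
  | zero => rfl
  | succ j ih =>
    refine exists_congr fun hA => ?_
    have hw := mem_union_left U (A.min'_mem hA)
    rw [filter_congr fun u hu => h _ hw u (mem_union_right A hu)]
    refine ih fun x hx y hy => h x ?_ y ?_ <;>
    · simp only [mem_union, mem_erase, mem_sdiff, mem_filter] at hx hy ⊢
      tauto

/-- The vertices outside `A ∪ U` are the explored ones. -/
structure IsExploration (G : SimpleGraph V) (v : V) (A U : Finset V) : Prop where
  disjoint : Disjoint A U
  notMem : v ∉ U
  reachable : ∀ x ∉ U, G.Reachable v x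
  closed : ∀ x ∉ A ∪ U, ∀ y, G.Adj x y → y ∉ U

namespace IsExploration

variable {G : SimpleGraph V} {v w : V} {A U : Finset V}

lemma step [DecidableRel G.Adj] (h : IsExploration G v A U) (hw : w ∈ A) :
    IsExploration G v (A.erase w ∪ {u ∈ U | G.Adj w u}) (U \ {u ∈ U | G.Adj w u}) where
  disjoint := by
    refine disjoint_union_left.2 ⟨?_, disjoint_sdiff⟩
    exact (h.disjoint.mono_left (erase_subset w A)).mono_right sdiff_subset
  notMem hv := h.notMem (mem_sdiff.1 hv).1
  reachable x hx := by
    by_cases hxU : x ∈ U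
    · have hadj : G.Adj w x := by simpa [hxU] using hx
      exact (h.reachable w (disjoint_left.1 h.disjoint hw)).trans hadj.reachable
    · exact h.reachable x hxU
  closed x hx y hxy hy := by
    obtain ⟨hyU, hyN⟩ := mem_sdiff.1 hy
    by_cases hxw : x = w
    · subst hxw; exact hyN (mem_filter.2 ⟨hyU, hxy⟩)
    · refine h.closed x ?_ y hxy hyU
      simp only [mem_union, mem_erase, mem_sdiff, not_or] at hx ⊢
      tauto

lemma reachable_notMem (h : IsExploration G v ∅ U) {x : V} (hx : G.Reachable v x) : x ∉ U := by
  replace hx := (SimpleGraph.reachable_iff_reflTransGen v x).1 hx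
  induction hx with
  | refl => exact h.notMem
  | tail _ hyz ih => exact h.closed _ (by simpa using ih) _ hyz

lemma nonempty_of_card_lt [Fintype V] [DecidableRel G.Adj] (h : IsExploration G v A U)
    (hcard : #(A ∪ U)ᶜ < #{x | G.Reachable v x}) : A.Nonempty := by
  rw [nonempty_iff_ne_empty]
  rintro rfl
  have : ({x | G.Reachable v x} : Finset V) ⊆ (∅ ∪ U)ᶜ := fun x hx => by
    simpa using h.reachable_notMem (mem_filter.1 hx).2
  exact (card_le_card this).not_gt hcard

theorem survives [Fintype V] [DecidableRel G.Adj] (h : IsExploration G v A U) {j : ℕ}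
    (hj : #(A ∪ U)ᶜ + j < #{x | G.Reachable v x}) : Survives G j A U := by
  induction j generalizing A U with
  | zero => exact h.nonempty_of_card_lt hj
  | succ j ih =>
    have hA := h.nonempty_of_card_lt (by omega)
    have hw := A.min'_mem hA
    refine ⟨hA, ih (h.step hw) ?_⟩
    have hunion : A.erase (A.min' hA) ∪ {u ∈ U | G.Adj (A.min' hA) u} ∪
        (U \ {u ∈ U | G.Adj (A.min' hA) u}) = (A ∪ U).erase (A.min' hA) := by
      ext x
      simp only [mem_union, mem_erase, mem_sdiff, mem_filter]
      have := disjoint_left.1 h.disjoint hw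
      by_cases hx : x = A.min' hA
      · simp [hx, this]
      · simp only [hx, ne_eq, not_false_eq_true, true_and]
        tauto
    rw [hunion, card_compl, card_erase_of_mem (mem_union_left U hw)]
    have := card_le_univ (A ∪ U)
    have := card_pos.2 ⟨_, mem_union_left U hw⟩
    rw [card_compl] at hj
    omega

end IsExploration

lemma isExploration_initial [Fintype V] (G : SimpleGraph V) (v : V) :
    IsExploration G v {v} (univ.erase v) where
  disjoint := by simp
  notMem := notMem_erase v univ
  reachable x hx := by rw [mem_erase, not_and_or] at hx; simp_all
  closed x hx := by simp at hx

theorem survives_of_le_card [Fintype V] {G : SimpleGraph V} [DecidableRel G.Adj] {v : V}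
    {m : ℕ} (hm : m ≤ #{x | G.Reachable v x}) : Survives G (m - 1) {v} (univ.erase v) := by
  refine (isExploration_initial G v).survives ?_
  have : v ∈ ({x | G.Reachable v x} : Finset V) := by simp
  have := card_pos.2 ⟨v, this⟩
  simp only [singleton_union, insert_erase (mem_univ v), compl_univ, card_empty, zero_add]
  omega

end Exploration

section ErdosRenyi

variable {n : ℕ}

instance (ω : Sym2 (Fin n) → Bool) : DecidableRel (graphOf ω).Adj :=
  inferInstanceAs (DecidableRel (SimpleGraph.fromRel _).Adj)

lemma graphOf_adj {ω : Sym2 (Fin n) → Bool} {x y : Fin n} :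
    (graphOf ω).Adj x y ↔ x ≠ y ∧ ω s(x, y) = true := by
  simp [graphOf, Sym2.eq_swap]

lemma compSize_eq_card (ω : Sym2 (Fin n) → Bool) (v : Fin n) :
    compSize ω v = #{x | (graphOf ω).Reachable v x} := by
  simp [compSize, Nat.card_eq_fintype_card, Fintype.card_subtype]

lemma inv_natCast_le_one (hn : n ≠ 0) : (n : ℝ≥0∞)⁻¹ ≤ 1 :=
  ENNReal.inv_le_one.2 (Nat.one_le_cast.2 (Nat.one_le_iff_ne_zero.2 hn))

lemma bernoulliMeasure_singleton (p : ℝ≥0∞) (b : Bool) :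
    _root_.bernoulliMeasure p {b} = if b then p else 1 - p := by
  cases b <;> simp [_root_.bernoulliMeasure]

lemma isProbabilityMeasure_bernoulliMeasure {p : ℝ≥0∞} (hp : p ≤ 1) :
    IsProbabilityMeasure (_root_.bernoulliMeasure p) :=
  ⟨by simp [_root_.bernoulliMeasure, add_tsub_cancel_of_le hp]⟩

lemma isProbabilityMeasure_erdosRenyi {p : ℝ≥0∞} (hp : p ≤ 1) :
    IsProbabilityMeasure (erdosRenyi n p) :=
  have := isProbabilityMeasure_bernoulliMeasure hp
  Measure.pi.instIsProbabilityMeasure _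

lemma erdosRenyi_filter_adj_eq {p : ℝ≥0∞} (hp : p ≤ 1) {w : Fin n} {U N : Finset (Fin n)}
    (hw : w ∉ U) (hN : N ⊆ U) :
    erdosRenyi n p {ω | {u ∈ U | (graphOf ω).Adj w u} = N} = p ^ #N * (1 - p) ^ (#U - #N) := by
  have hinj : Function.Injective fun u => s(w, u) := fun _ _ h => Sym2.congr_right.1 h
  have hset : {ω | {u ∈ U | (graphOf ω).Adj w u} = N} =
      (↑(U.image fun u => s(w, u)) : Set (Sym2 (Fin n))).pi
        fun e => {decide (e ∈ N.image fun u => s(w, u))} := by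
    ext ω
    simp only [Set.mem_ofPred_eq, Set.mem_pi, coe_image, Set.mem_image, mem_coe,
      forall_exists_index, and_imp, forall_apply_eq_imp_iff₂, Set.mem_singleton_iff,
      hinj.mem_finset_image, Finset.ext_iff, mem_filter, graphOf_adj]
    refine forall_congr' fun u => ?_
    by_cases hu : u ∈ U
    · have hwu : w ≠ u := by rintro rfl; exact hw hu
      cases ω s(w, u) <;> simp [hu, hwu]
    · simpa [hu] using fun h => hu (hN h)
  have := isProbabilityMeasure_bernoulliMeasure hp
  rw [hset, erdosRenyi, Measure.pi_pi_finset, prod_image hinj.injOn]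
  simp only [hinj.mem_finset_image, bernoulliMeasure_singleton, decide_eq_true_eq]
  rw [prod_ite, prod_const, prod_const, filter_mem_eq_inter, inter_eq_right.2 hN,
    filter_notMem_eq_sdiff, card_sdiff_of_subset hN]

lemma dependsOn_survives (j : ℕ) (A U : Finset (Fin n)) :
    DependsOn (· ∈ {ω : Sym2 (Fin n) → Bool | Survives (graphOf ω) j A U}) ↑(A ∪ U).sym2 :=
  fun ω ω' h => propext <| survives_congr fun x hx y hy => by
    simp only [graphOf_adj, h _ (mk_mem_sym2_iff.2 ⟨hx, hy⟩)]

lemma dependsOn_filter_adj (w : Fin n) (U N : Finset (Fin n)) :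
    DependsOn (· ∈ {ω : Sym2 (Fin n) → Bool | {u ∈ U | (graphOf ω).Adj w u} = N})
      ↑(U.image fun u => s(w, u)) :=
  fun ω ω' h => by
    have : {u ∈ U | (graphOf ω).Adj w u} = {u ∈ U | (graphOf ω').Adj w u} :=
      filter_congr fun u hu => by simp only [graphOf_adj, h _ (mem_coe.2 (mem_image_of_mem _ hu))]
    simp only [Set.mem_ofPred_eq, this]

lemma measureReal_survives_succ_le {p : ℝ≥0∞} (hp : p ≤ 1) {j : ℕ} {A U : Finset (Fin n)}
    (hAU : Disjoint A U) (hA : A.Nonempty) :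
    (erdosRenyi n p).real {ω | Survives (graphOf ω) (j + 1) A U} ≤
      ∑ N ∈ U.powerset, p.toReal ^ #N * (1 - p.toReal) ^ (#U - #N) *
        (erdosRenyi n p).real {ω | Survives (graphOf ω) j (A.erase (A.min' hA) ∪ N) (U \ N)} := by
  have := isProbabilityMeasure_bernoulliMeasure hp
  have := isProbabilityMeasure_erdosRenyi (n := n) hp
  set w := A.min' hA
  have hwU : w ∉ U := disjoint_left.1 hAU (A.min'_mem hA)
  calc _ ≤ (erdosRenyi n p).real (⋃ N ∈ U.powerset, {ω | {u ∈ U | (graphOf ω).Adj w u} = N} ∩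
          {ω | Survives (graphOf ω) j (A.erase w ∪ N) (U \ N)}) := by
        refine measureReal_mono (fun ω ⟨_, hω⟩ => ?_) (measure_ne_top _ _)
        exact Set.mem_biUnion (mem_powerset.2 (filter_subset _ U)) ⟨rfl, hω⟩
    _ ≤ _ := measureReal_biUnion_finset_le _ _
    _ = _ := sum_congr rfl fun N hN => by
        have hdisj : Disjoint (U.image fun u => s(w, u)) (A.erase w ∪ U).sym2 := by
          refine disjoint_left.2 fun e he he' => ?_
          obtain ⟨u, hu, rfl⟩ := mem_image.1 he
          have := (mk_mem_sym2_iff.1 he').1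
          simp only [mem_union, mem_erase, ne_eq, not_true_eq_false, false_and, false_or] at this
          exact hwU this
        have hsub : A.erase w ∪ N ∪ U \ N ⊆ A.erase w ∪ U :=
          union_subset (union_subset_union_right (mem_powerset.1 hN))
            (sdiff_subset.trans subset_union_right)
        rw [measureReal_def, measureReal_def, erdosRenyi, pi_inter_eq_mul_of_dependsOn _ hdisj
          (dependsOn_filter_adj w U N)
          ((dependsOn_survives j _ _).mono (coe_subset.2 (sym2_mono hsub))), ← erdosRenyi, erdosRenyi_filter_adj_eq hp hwU (mem_powerset.1 hN)]
        simp [ENNReal.toReal_sub_of_le hp ENNReal.one_ne_top]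

theorem measureReal_survives_le (hn : n ≠ 0) (j : ℕ) {A U : Finset (Fin n)} (hAU : Disjoint A U) :
    (erdosRenyi n (n : ℝ≥0∞)⁻¹).real {ω | Survives (graphOf ω) j A U} ≤ survivalProb n j #A := by
  have hp := inv_natCast_le_one hn
  have := isProbabilityMeasure_erdosRenyi (n := n) hp
  rcases A.eq_empty_or_nonempty with rfl | hA
  · simp [not_survives_empty, survivalProb_nonneg]
  induction j generalizing A U with
  | zero => exact measureReal_le_one.trans_eq (survivalProb_zero (card_pos.2 hA)).symm
  | succ j ih =>
    set w := A.min' hA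
    have hw := A.min'_mem hA
    have hq : (0 : ℝ) ≤ 1 - (n : ℝ)⁻¹ := sub_nonneg.2 (Nat.cast_inv_le_one n)
    have hnext : ∀ N ∈ U.powerset, (erdosRenyi n (n : ℝ≥0∞)⁻¹).real
        {ω | Survives (graphOf ω) j (A.erase w ∪ N) (U \ N)} ≤ survivalProb n j (#A - 1 + #N) := by
      intro N hN
      have hNU := mem_powerset.1 hN
      have hdisj : Disjoint (A.erase w) N :=
        (hAU.mono_left (erase_subset w A)).mono_right hNU
      rw [← card_erase_of_mem hw, ← card_union_of_disjoint hdisj]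
      rcases (A.erase w ∪ N).eq_empty_or_nonempty with h | h
      · simp [h, not_survives_empty, survivalProb_nonneg]
      refine ih ?_ h
      exact disjoint_union_left.2 ⟨(hAU.mono_left (erase_subset w A)).mono_right sdiff_subset,
        disjoint_sdiff⟩
    calc _ ≤ _ := measureReal_survives_succ_le hp hAU hA
      _ ≤ ∑ N ∈ U.powerset, (n : ℝ)⁻¹ ^ #N * (1 - (n : ℝ)⁻¹) ^ (#U - #N) *
            survivalProb n j (#A - 1 + #N) := by
          simp only [ENNReal.toReal_inv, ENNReal.toReal_natCast]
          exact sum_le_sum fun N hN => mul_le_mul_of_nonneg_left (hnext N hN) (by positivity)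
      _ = ∑ k ∈ range (#U + 1), binomProb #U (n : ℝ)⁻¹ k * survivalProb n j (#A - 1 + k) := by
          rw [sum_powerset_apply_card
            (fun k => (n : ℝ)⁻¹ ^ k * (1 - (n : ℝ)⁻¹) ^ (#U - k) * survivalProb n j (#A - 1 + k))]
          simp only [binomProb, nsmul_eq_mul, mul_assoc]
      _ ≤ ∑ k ∈ range (n + 1), binomProb n (n : ℝ)⁻¹ k * survivalProb n j (#A - 1 + k) :=
          sum_binomProb_mul_le_of_le (by positivity) (Nat.cast_inv_le_one n)
            ((survivalProb_monotone j).comp fun _ _ h => Nat.add_le_add_left h _)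
            ((card_le_univ U).trans_eq (Fintype.card_fin n))
      _ = survivalProb n (j + 1) #A := (survivalProb_succ j (card_pos.2 hA)).symm

lemma le_card_filter_le_compSize {ω : Sym2 (Fin n) → Bool} {m : ℕ}
    (hm : m ≤ maxCompSize n ω) : m ≤ #{v | m ≤ compSize ω v} := by
  rcases Nat.eq_zero_or_pos m with rfl | hm₀
  · exact Nat.zero_le _
  obtain ⟨v, -, hv⟩ := (Finset.le_sup_iff hm₀).1 hm
  have hsub : ({x | (graphOf ω).Reachable v x} : Finset (Fin n)) ⊆
      ({x | m ≤ compSize ω x} : Finset (Fin n)) := by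
    intro x hx
    have hvx := (mem_filter.1 hx).2
    have hcomp : compSize ω x = compSize ω v := by
      rw [compSize_eq_card, compSize_eq_card]
      exact congrArg card (filter_congr fun y _ => ⟨hvx.trans, hvx.symm.trans⟩)
    exact mem_filter.2 ⟨mem_univ x, hcomp.symm ▸ hv⟩
  exact (compSize_eq_card ω v ▸ hv).trans (card_le_card hsub)

theorem natCast_mul_measureReal_le_maxCompSize_le (hn : 30 ≤ n) (m : ℕ) :
    m * (erdosRenyi n (n : ℝ≥0∞)⁻¹).real {ω | m ≤ maxCompSize n ω} ≤
      n * survivalProb n (m - 1) 1 := by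
  have := isProbabilityMeasure_erdosRenyi (n := n) (inv_natCast_le_one (n := n) (by omega))
  calc _ ≤ ∑ v : Fin n, (erdosRenyi n (n : ℝ≥0∞)⁻¹).real {ω | m ≤ compSize ω v} :=
        natCast_mul_measureReal_le_sum _ univ .of_discrete (fun _ => .of_discrete)
          fun ω hω => le_card_filter_le_compSize hω
    _ ≤ ∑ _v : Fin n, survivalProb n (m - 1) 1 := sum_le_sum fun v _ => by
        refine (measureReal_mono (s₂ := {ω | Survives (graphOf ω) (m - 1) {v} (univ.erase v)})
          fun ω hω => survives_of_le_card ((compSize_eq_card ω v).symm.trans_ge hω)).trans ?_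
        simpa using measureReal_survives_le (by omega) (m - 1)
          (disjoint_singleton_left.2 (notMem_erase v univ))
    _ = n * survivalProb n (m - 1) 1 := by simp

end ErdosRenyi

lemma div_mul_six_div_sqrt_le {A x m : ℝ} (hA : 0 < A) (hx : 0 ≤ x)
    (hm : A * x ^ ((2 : ℝ) / 3) < m) :
    x / m * (6 / √m) ≤ 6 * A ^ (-(3 : ℝ) / 2) := by
  have hm₀ : 0 < m := lt_of_le_of_lt (by positivity) hm
  have key : A ^ ((3 : ℝ) / 2) * x ≤ m * √m := by
    have h := Real.rpow_le_rpow (by positivity) hm.le (by norm_num : (0 : ℝ) ≤ 3 / 2)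
    rw [Real.mul_rpow hA.le (by positivity), ← Real.rpow_mul hx] at h
    rw [Real.sqrt_eq_rpow, ← Real.rpow_one_add' hm₀.le (by norm_num)]
    norm_num at h ⊢
    exact h
  rw [neg_div, Real.rpow_neg hA.le, div_mul_div_comm, div_le_iff₀ (by positivity)]
  have hA32 : 0 < A ^ ((3 : ℝ) / 2) := by positivity
  rw [mul_comm 6, mul_assoc, inv_mul_eq_div, le_div_iff₀ hA32]
  nlinarith

end NachmiasPeres

open NachmiasPeres

/-- **Easy upper bound (Section 3), Nachmias–Peres.** For `n ≥ 1000` and `A > 1`,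
in `G(n,1/n)`, `P(|C₁| > A n^{2/3}) ≤ 6 A^{-3/2}`. -/
theorem largest_component_easy_upper_bound (n : ℕ) (hn : 1000 ≤ n) (A : ℝ) (hA : 1 < A) :
    erdosRenyi n ((n : ℝ≥0∞))⁻¹
        {ω | A * (n : ℝ) ^ ((2 : ℝ) / 3) < (maxCompSize n ω : ℝ)} ≤
      ENNReal.ofReal (6 * A ^ (-(3 : ℝ) / 2)) := by
  have := isProbabilityMeasure_erdosRenyi (n := n) (inv_natCast_le_one (n := n) (by omega))
  set m := ⌊A * (n : ℝ) ^ ((2 : ℝ) / 3)⌋₊ + 1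
  have hm : A * (n : ℝ) ^ ((2 : ℝ) / 3) < m := by
    simpa [m] using Nat.lt_floor_add_one (A * (n : ℝ) ^ ((2 : ℝ) / 3))
  rw [← ofReal_measureReal]
  refine ENNReal.ofReal_le_ofReal ?_
  calc _ ≤ (erdosRenyi n (n : ℝ≥0∞)⁻¹).real {ω | m ≤ maxCompSize n ω} :=
        measureReal_mono fun ω hω => Nat.floor_lt (by positivity) |>.2 hω
    _ ≤ n / m * survivalProb n (m - 1) 1 := by
        rw [div_mul_eq_mul_div, le_div_iff₀ (by positivity), mul_comm]
        exact natCast_mul_measureReal_le_maxCompSize_le (by omega) m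
    _ ≤ n / m * (6 / √m) := by
        gcongr
        simpa [m] using survivalProb_le_six_div_sqrt (n := n) (by omega) (m - 1)
    _ ≤ 6 * A ^ (-(3 : ℝ) / 2) := div_mul_six_div_sqrt_le (by linarith) n.cast_nonneg hm
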